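/- arXiv:2502.02898 — 2 statements merged into one kernel-verified Lean document; each statement's English description precedes it below -/
import Mathlib

section
/- Let f be in the class BT_B with Taylor coefficients a_n, and let γ_1 = a_2/2, γ_2 = (1/2)(a_3 − a_2²/2), γ_3 = (1/2)(a_4 − a_2·a_3 + a_2³/3) be its logarithmic coefficients. Then the second Hankel determinant of logarithmic coefficients satisfies |γ_1·γ_3 − γ_2²| ≤ 1/144. Equivalently, |a_2⁴ − 12·a_3² + 12·a_2·a_4|/48 ≤ 1/144. -/
open Complex Metric

/-- Principal branch of the square root: `w^(1/2) = exp((1/2) * Log w)`. -/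
noncomputable def psqrt (w : ℂ) : ℂ := Complex.exp ((1/2 : ℂ) * Complex.log w)

/-- The `n`-th Taylor coefficient of `f` at `0`, i.e. `f^(n)(0)/n!`. -/
noncomputable def tCoeff (f : ℂ → ℂ) (n : ℕ) : ℂ := iteratedDeriv n f 0 / n.factorial

/-- The class `BT_B` of bounded turning functions associated with the bean-shaped domain:
`f` is analytic on the unit disk, `f 0 = 0`, `f' 0 = 1`, `f` injective on the disk,
and `f'(z) = (1 + tanh (ω z))^(1/2)` for a Schwarz function `ω`. -/
def IsBTB (f : ℂ → ℂ) : Prop :=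
  AnalyticOnNhd ℂ f (ball 0 1) ∧ f 0 = 0 ∧ deriv f 0 = 1 ∧
  Set.InjOn f (ball 0 1) ∧
  ∃ ω : ℂ → ℂ, AnalyticOnNhd ℂ ω (ball 0 1) ∧ ω 0 = 0 ∧
    (∀ z ∈ ball (0:ℂ) 1, ‖ω z‖ < 1) ∧
    (∀ z ∈ ball (0:ℂ) 1, deriv f z = psqrt (1 + Complex.tanh (ω z)))

/-!
Write `f' = g` and let `c₁, c₂, c₃` be the Taylor coefficients of the Schwarz function `ω`.
Differentiating `g² = 1 + tanh ω` and using `tanh' = 1 - tanh² = g² (2 - g²)` gives the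
polynomial differential equation `2 g' = ω' g (2 - g²)`, which determines `a₂, a₃, a₄` as
polynomials in `c₁, c₂, c₃`; the Hankel determinant becomes
`-73 c₁⁴/36864 - c₁² c₂/2304 - c₂²/144 + c₁ c₃/128`. Applying the Schwarz–Pick lemma to `ω(z)/z`
and to the Möbius normalisation of `ω(z)/z` gives the classical bounds `|c₁| ≤ 1`,
`|c₂| ≤ 1 - |c₁|²`, `|c₃| ≤ 1 - |c₁|² - |c₂|²/(1 + |c₁|)`, and under these the triangle
inequality bounds the determinant by `1/144`.
-/

open Filter Topology Set ComplexConjugate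

attribute [local fun_prop] AnalyticAt.contDiffAt

lemma tCoeff_zero (f : ℂ → ℂ) : tCoeff f 0 = f 0 := by simp [tCoeff]

lemma tCoeff_succ (f : ℂ → ℂ) (n : ℕ) : tCoeff f (n + 1) = tCoeff (deriv f) n / (n + 1) := by
  simp only [tCoeff, iteratedDeriv_succ', Nat.factorial_succ]
  push_cast
  field_simp

lemma AnalyticAt.dslope {𝕜 E : Type*} [NontriviallyNormedField 𝕜] [NormedAddCommGroup E]
    [NormedSpace 𝕜 E] {φ : 𝕜 → E} {c : 𝕜} (hφ : AnalyticAt 𝕜 φ c) :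
    AnalyticAt 𝕜 (dslope φ c) c := by
  obtain ⟨p, hp⟩ := hφ
  exact hp.has_fpower_series_dslope_fslope.analyticAt

lemma tCoeff_dslope {φ : ℂ → ℂ} (hφ : AnalyticAt ℂ φ 0) (n : ℕ) :
    tCoeff (dslope φ 0) n = tCoeff φ (n + 1) := by
  set χ := dslope φ 0
  have hχ : AnalyticAt ℂ χ 0 := hφ.dslope
  have hφ_eq : φ = fun z => φ 0 + z * χ z := funext fun z => by
    simpa using eq_add_of_sub_eq' (sub_smul_dslope φ 0 z).symm
  have hφ_deriv : iteratedDeriv (n + 1) φ 0 = (n + 1) * iteratedDeriv n χ 0 := by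
    rw [hφ_eq, iteratedDeriv_const_add n.succ_pos,
      iteratedDeriv_fun_mul (by fun_prop) (by fun_prop)]
    simp [iteratedDeriv_fun_id_zero]
  simp only [tCoeff, hφ_deriv, Nat.factorial_succ]
  push_cast
  field_simp

noncomputable def diskAut (a w : ℂ) : ℂ := (w - a) / (1 - conj a * w)

@[simp] lemma diskAut_self (a : ℂ) : diskAut a a = 0 := by simp [diskAut]

lemma one_sub_conj_mul_ne_zero {a w : ℂ} (ha : ‖a‖ < 1) (hw : ‖w‖ ≤ 1) : 1 - conj a * w ≠ 0 := by
  intro h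
  have : ‖conj a * w‖ = 1 := by rw [← sub_eq_zero.mp h, norm_one]
  rw [norm_mul, Complex.norm_conj] at this
  nlinarith [norm_nonneg a, norm_nonneg w]

lemma norm_one_sub_conj_mul_self {a : ℂ} (ha : ‖a‖ ≤ 1) : ‖1 - conj a * a‖ = 1 - ‖a‖ ^ 2 := by
  rw [Complex.conj_mul', ← ofReal_pow, ← ofReal_one, ← ofReal_sub, norm_real, Real.norm_eq_abs,
    abs_of_nonneg (by nlinarith [norm_nonneg a])]

lemma norm_diskAut_le_one {a w : ℂ} (ha : ‖a‖ < 1) (hw : ‖w‖ ≤ 1) : ‖diskAut a w‖ ≤ 1 := by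
  have key : normSq (1 - conj a * w) - normSq (w - a) = (1 - normSq a) * (1 - normSq w) := by
    simp only [normSq_apply, sub_re, sub_im, mul_re, mul_im, conj_re, conj_im, one_re, one_im]
    ring
  have hle : normSq (w - a) ≤ normSq (1 - conj a * w) := by
    simp only [normSq_eq_norm_sq] at key ⊢
    have : 0 ≤ (1 - ‖a‖ ^ 2) * (1 - ‖w‖ ^ 2) :=
      mul_nonneg (by nlinarith [norm_nonneg a]) (by nlinarith [norm_nonneg w])
    linarith
  rw [diskAut, norm_div, div_le_one₀ (norm_pos_iff.mpr (one_sub_conj_mul_ne_zero ha hw))]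
  simp only [normSq_eq_norm_sq] at hle
  exact (sq_le_sq₀ (norm_nonneg _) (norm_nonneg _)).mp hle

lemma tCoeff_diskAut_comp {χ : ℂ → ℂ} (hχ : AnalyticAt ℂ χ 0) (hk : 1 - conj (χ 0) * χ 0 ≠ 0) :
    tCoeff (fun z => diskAut (χ 0) (χ z)) 1 = tCoeff χ 1 / (1 - conj (χ 0) * χ 0) ∧
    tCoeff (fun z => diskAut (χ 0) (χ z)) 2 =
      (tCoeff χ 2 + conj (χ 0) * tCoeff χ 1 ^ 2 / (1 - conj (χ 0) * χ 0)) /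
        (1 - conj (χ 0) * χ 0) := by
  set a := χ 0 with ha
  have hM : AnalyticAt ℂ (fun z => diskAut a (χ z)) 0 := by
    unfold diskAut
    fun_prop (disch := exact hk)
  have hD : ∀ᶠ z in 𝓝 0, 1 - conj a * χ z ≠ 0 := by
    refine ContinuousAt.eventually_ne ?_ hk
    fun_prop
  have hMD : (fun z => diskAut a (χ z) * (1 - conj a * χ z)) =ᶠ[𝓝 0] fun z => χ z - a := by
    filter_upwards [hD] with z hz
    exact div_mul_cancel₀ _ hz
  have e1 := hMD.iteratedDeriv_eq 1
  have e2 := hMD.iteratedDeriv_eq 2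
  simp (discharger := first | fun_prop | exact hM.contDiffAt) only [iteratedDeriv_fun_mul,
    iteratedDeriv_fun_sub, iteratedDeriv_const] at e1 e2
  simp [Finset.sum_range_succ, ← ha] at e1 e2
  have hM1 : deriv (fun z => diskAut a (χ z)) 0 = deriv χ 0 / (1 - conj a * a) := by
    field_simp
    linear_combination e1
  have hM2 : iteratedDeriv 2 (fun z => diskAut a (χ z)) 0 =
      (iteratedDeriv 2 χ 0 + 2 * conj a * deriv χ 0 ^ 2 / (1 - conj a * a)) / (1 - conj a * a) := by
    rw [hM1] at e2
    rw [eq_div_iff hk]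
    linear_combination e2
  refine ⟨by simp [tCoeff, hM1], ?_⟩
  simp only [tCoeff, hM2, iteratedDeriv_one, Nat.factorial_one, Nat.factorial_two, Nat.cast_one,
    Nat.cast_ofNat, div_one]
  ring

/-- The closed target makes this class stable under `dslope` (Schwarz lemma). -/
def IsDiskSelfMap (χ : ℂ → ℂ) : Prop :=
  DifferentiableOn ℂ χ (ball 0 1) ∧ MapsTo χ (ball 0 1) (closedBall 0 1)

namespace IsDiskSelfMap

variable {χ : ℂ → ℂ}

lemma analyticAt_zero (h : IsDiskSelfMap χ) : AnalyticAt ℂ χ 0 :=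
  h.1.analyticAt (ball_mem_nhds 0 one_pos)

lemma norm_le_one (h : IsDiskSelfMap χ) {z : ℂ} (hz : z ∈ ball 0 1) : ‖χ z‖ ≤ 1 := by
  simpa using h.2 hz

lemma dslope (h : IsDiskSelfMap χ) (h0 : χ 0 = 0) : IsDiskSelfMap (dslope χ 0) := by
  refine ⟨(Complex.differentiableOn_dslope (ball_mem_nhds 0 one_pos)).2 h.1, fun z hz => ?_⟩
  have hmaps : MapsTo χ (ball 0 1) (closedBall (χ 0) 1) := by rw [h0]; exact h.2
  simpa using Complex.norm_dslope_le_div_of_mapsTo_ball h.1 hmaps hz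

lemma diskAut_comp (h : IsDiskSelfMap χ) {a : ℂ} (ha : ‖a‖ < 1) :
    IsDiskSelfMap fun z => diskAut a (χ z) := by
  refine ⟨fun z hz => ?_, fun z hz => ?_⟩
  · exact ((h.1 z hz).sub_const a).div ((h.1 z hz).const_mul _ |>.const_sub 1)
      (one_sub_conj_mul_ne_zero ha (h.norm_le_one hz))
  · simpa using norm_diskAut_le_one ha (h.norm_le_one hz)

lemma tCoeff_eq_zero_of_norm_eq_one (h : IsDiskSelfMap χ) (h1 : ‖χ 0‖ = 1) {n : ℕ} (hn : n ≠ 0) :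
    tCoeff χ n = 0 := by
  have hconst : EqOn χ (fun _ => χ 0) (ball 0 1) :=
    Complex.eqOn_of_isPreconnected_of_isMaxOn_norm (convex_ball 0 1).isPreconnected isOpen_ball
      h.1 (mem_ball_self one_pos) fun z hz => (h.norm_le_one hz).trans h1.ge
  have := (hconst.eventuallyEq_of_mem (ball_mem_nhds 0 one_pos)).iteratedDeriv_eq n
  simp [tCoeff, this, iteratedDeriv_const, hn]

lemma norm_tCoeff_one_le (h : IsDiskSelfMap χ) : ‖tCoeff χ 1‖ ≤ 1 - ‖χ 0‖ ^ 2 := by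
  rcases (h.norm_le_one (mem_ball_self one_pos)).eq_or_lt with h1 | h1
  · simp [h.tCoeff_eq_zero_of_norm_eq_one h1 one_ne_zero, h1]
  have hM := h.diskAut_comp h1
  have hN0 := (hM.dslope (diskAut_self _)).norm_le_one (mem_ball_self one_pos)
  have hK : 0 < 1 - ‖χ 0‖ ^ 2 := by nlinarith [norm_nonneg (χ 0)]
  rwa [← tCoeff_zero (_root_.dslope _ 0), tCoeff_dslope hM.analyticAt_zero,
    (tCoeff_diskAut_comp h.analyticAt_zero (one_sub_conj_mul_ne_zero h1 h1.le)).1, norm_div,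
    norm_one_sub_conj_mul_self h1.le, div_le_one₀ hK] at hN0

lemma norm_tCoeff_two_le (h : IsDiskSelfMap χ) :
    ‖tCoeff χ 2‖ ≤ 1 - ‖χ 0‖ ^ 2 - ‖tCoeff χ 1‖ ^ 2 / (1 + ‖χ 0‖) := by
  rcases (h.norm_le_one (mem_ball_self one_pos)).eq_or_lt with h1 | h1
  · simp [h.tCoeff_eq_zero_of_norm_eq_one h1, h1]
  have hM := h.diskAut_comp h1
  have hN := (hM.dslope (diskAut_self _)).norm_tCoeff_one_le
  obtain ⟨hM1, hM2⟩ := tCoeff_diskAut_comp h.analyticAt_zero (one_sub_conj_mul_ne_zero h1 h1.le)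
  rw [← tCoeff_zero (_root_.dslope _ 0), tCoeff_dslope hM.analyticAt_zero,
    tCoeff_dslope hM.analyticAt_zero, hM1, hM2] at hN
  set k := 1 - conj (χ 0) * χ 0
  set B := conj (χ 0) * tCoeff χ 1 ^ 2 / k
  have hk : ‖k‖ = 1 - ‖χ 0‖ ^ 2 := norm_one_sub_conj_mul_self h1.le
  have hK : 0 < 1 - ‖χ 0‖ ^ 2 := by nlinarith [norm_nonneg (χ 0)]
  have hB : ‖B‖ = ‖χ 0‖ * ‖tCoeff χ 1‖ ^ 2 / (1 - ‖χ 0‖ ^ 2) := by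
    simp [B, hk]
  rw [norm_div, norm_div, hk, div_le_iff₀ hK] at hN
  calc ‖tCoeff χ 2‖ = ‖(tCoeff χ 2 + B) - B‖ := by rw [add_sub_cancel_right]
    _ ≤ ‖tCoeff χ 2 + B‖ + ‖B‖ := norm_sub_le _ _
    _ ≤ (1 - (‖tCoeff χ 1‖ / (1 - ‖χ 0‖ ^ 2)) ^ 2) * (1 - ‖χ 0‖ ^ 2) + ‖B‖ := by gcongr
    _ = 1 - ‖χ 0‖ ^ 2 - ‖tCoeff χ 1‖ ^ 2 / (1 + ‖χ 0‖) := by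
      rw [hB]
      field_simp
      ring

lemma norm_tCoeff_le_of_map_zero {ω : ℂ → ℂ} (h : IsDiskSelfMap ω) (h0 : ω 0 = 0) :
    ‖tCoeff ω 1‖ ≤ 1 ∧ ‖tCoeff ω 2‖ ≤ 1 - ‖tCoeff ω 1‖ ^ 2 ∧
      ‖tCoeff ω 3‖ ≤ 1 - ‖tCoeff ω 1‖ ^ 2 - ‖tCoeff ω 2‖ ^ 2 / (1 + ‖tCoeff ω 1‖) := by
  have hχ := h.dslope h0
  have hcoeff := tCoeff_dslope h.analyticAt_zero
  refine ⟨?_, ?_, ?_⟩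
  · simpa [← tCoeff_zero, hcoeff] using hχ.norm_le_one (mem_ball_self one_pos)
  · simpa [← tCoeff_zero, hcoeff] using hχ.norm_tCoeff_one_le
  · simpa [← tCoeff_zero, hcoeff] using hχ.norm_tCoeff_two_le

end IsDiskSelfMap

lemma Complex.hasDerivAt_tanh {z : ℂ} (hz : cosh z ≠ 0) : HasDerivAt tanh (1 - tanh z ^ 2) z := by
  have htanh : tanh = sinh / cosh := funext tanh_eq_sinh_div_cosh
  rw [htanh]
  refine ((hasDerivAt_sinh z).div (hasDerivAt_cosh z) hz).congr_deriv ?_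
  rw [Pi.div_apply]
  field_simp

lemma psqrt_sq {w : ℂ} (hw : w ≠ 0) : psqrt w ^ 2 = w := by
  rw [psqrt, ← Complex.exp_nat_mul, ← mul_assoc]
  norm_num [Complex.exp_log hw]

lemma ode_of_eventually_eq_psqrt {g u : ℂ → ℂ} (hg : AnalyticAt ℂ g 0) (hu : AnalyticAt ℂ u 0)
    (hu0 : u 0 = 0) (h : ∀ᶠ z in 𝓝 0, g z = psqrt (1 + tanh (u z))) :
    (fun z => 2 * deriv g z) =ᶠ[𝓝 0] fun z => deriv u z * (g z * (2 - g z ^ 2)) := by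
  have hcosh0 : cosh (u 0) ≠ 0 := by simp [hu0]
  have hcosh : ∀ᶠ z in 𝓝 0, cosh (u z) ≠ 0 :=
    (continuous_cosh.continuousAt.comp hu.continuousAt).eventually_ne hcosh0
  have hne : ∀ᶠ z in 𝓝 0, 1 + tanh (u z) ≠ 0 :=
    (continuousAt_const.add ((hasDerivAt_tanh hcosh0).continuousAt.comp
      hu.continuousAt)).eventually_ne (by simp [hu0])
  have hsq : (fun z => g z ^ 2) =ᶠ[𝓝 0] fun z => 1 + tanh (u z) := by
    filter_upwards [h, hne] with z hz hz'
    rw [hz, psqrt_sq hz']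
  filter_upwards [hsq.deriv, hsq, hne, hcosh, hg.eventually_analyticAt, hu.eventually_analyticAt]
    with z hd hz hnez hcz hgz huz
  have hL : HasDerivAt (fun z => g z ^ 2) (2 * g z * deriv g z) z := by
    simpa using hgz.differentiableAt.hasDerivAt.fun_pow 2
  have hR : HasDerivAt (fun z => 1 + tanh (u z)) ((1 - tanh (u z) ^ 2) * deriv u z) z :=
    ((hasDerivAt_tanh hcz).comp z huz.differentiableAt.hasDerivAt).const_add 1
  rw [hL.deriv, hR.deriv] at hd
  have hgz0 : g z ≠ 0 := fun h0 => hnez (by rw [← hz, h0]; ring)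
  refine mul_left_cancel₀ hgz0 ?_
  linear_combination hd + deriv u z * (g z ^ 2 - 1 + tanh (u z)) * hz

lemma tCoeff_of_ode {g u : ℂ → ℂ} (hg : AnalyticAt ℂ g 0) (hu : AnalyticAt ℂ u 0) (hg0 : g 0 = 1)
    (h : (fun z => 2 * deriv g z) =ᶠ[𝓝 0] fun z => deriv u z * (g z * (2 - g z ^ 2))) :
    tCoeff g 1 = tCoeff u 1 / 2 ∧ tCoeff g 2 = tCoeff u 2 / 2 - tCoeff u 1 ^ 2 / 8 ∧
      tCoeff g 3 = tCoeff u 3 / 2 - tCoeff u 1 * tCoeff u 2 / 4 - 5 * tCoeff u 1 ^ 3 / 48 := by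
  have e0 := h.iteratedDeriv_eq 0
  have e1 := h.iteratedDeriv_eq 1
  have e2 := h.iteratedDeriv_eq 2
  simp_rw [pow_two] at e0 e1 e2
  simp (discharger := fun_prop) only [iteratedDeriv_fun_sub,
    iteratedDeriv_fun_mul, iteratedDeriv_const] at e0 e1 e2
  simp [Finset.sum_range_succ, ← iteratedDeriv_succ', hg0] at e0 e1 e2
  have G1 : deriv g 0 = deriv u 0 / 2 := by linear_combination e0 / 2
  rw [G1] at e1 e2
  have G2 : iteratedDeriv 2 g 0 = iteratedDeriv 2 u 0 / 2 - deriv u 0 ^ 2 / 4 := by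
    linear_combination e1 / 2
  rw [G2] at e2
  have G3 : iteratedDeriv 3 g 0 = iteratedDeriv 3 u 0 / 2 - 3 * deriv u 0 * iteratedDeriv 2 u 0 / 4
      - 5 * deriv u 0 ^ 3 / 8 := by
    linear_combination e2 / 2
  simp only [tCoeff, iteratedDeriv_one, G1, G2, G3, Nat.factorial, Nat.succ_eq_add_one,
    Nat.reduceAdd, Nat.cast_mul, Nat.cast_ofNat, Nat.cast_one]
  refine ⟨by ring, by ring, by ring⟩

/- Eliminating `t` and then `y` leaves `25 x⁴ / 768 ≤ 13 x² / 48`, with equality at `x = 0`. -/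
lemma hankel_majorant_le {x y t : ℝ} (hx0 : 0 ≤ x) (hy0 : 0 ≤ y) (hx1 : x ≤ 1)
    (hy : y ≤ 1 - x ^ 2) (ht : t ≤ 1 - x ^ 2 - y ^ 2 / (1 + x)) :
    73 * x ^ 4 / 36864 + x ^ 2 * y / 2304 + y ^ 2 / 144 + x * t / 128 ≤ 1 / 144 := by
  set d := y ^ 2 / (1 + x)
  have hd : d * (1 + x) = y ^ 2 := div_mul_cancel₀ _ (by positivity)
  have hd_le : d ≤ (1 - x) ^ 2 * (1 + x) := by
    have : y ^ 2 ≤ (1 - x ^ 2) ^ 2 := pow_le_pow_left₀ hy0 hy 2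
    nlinarith
  have hxt : x * t ≤ x * (1 - x ^ 2 - d) := mul_le_mul_of_nonneg_left ht hx0
  have hxy : x ^ 2 * y ≤ x ^ 2 * (1 - x ^ 2) := mul_le_mul_of_nonneg_left hy (sq_nonneg x)
  have hd8 : d * (8 - x) ≤ (1 - x) ^ 2 * (1 + x) * (8 - x) :=
    mul_le_mul_of_nonneg_right hd_le (by linarith)
  have hx4 : 25 * x ^ 4 / 768 ≤ 13 * x ^ 2 / 48 := by nlinarith [sq_nonneg x]
  nlinarith

lemma norm_hankel_le {c₁ c₂ c₃ : ℂ} (h₁ : ‖c₁‖ ≤ 1) (h₂ : ‖c₂‖ ≤ 1 - ‖c₁‖ ^ 2)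
    (h₃ : ‖c₃‖ ≤ 1 - ‖c₁‖ ^ 2 - ‖c₂‖ ^ 2 / (1 + ‖c₁‖)) :
    ‖-(73 * c₁ ^ 4 / 36864) - c₁ ^ 2 * c₂ / 2304 - c₂ ^ 2 / 144 + c₁ * c₃ / 128‖ ≤ 1 / 144 := by
  set a := 73 * c₁ ^ 4 / 36864
  set b := c₁ ^ 2 * c₂ / 2304
  set c := c₂ ^ 2 / 144
  set d := c₁ * c₃ / 128
  calc ‖-a - b - c + d‖ ≤ ‖a‖ + ‖b‖ + ‖c‖ + ‖d‖ := by
        linarith [norm_add_le (-a - b - c) d, norm_sub_le (-a - b) c, norm_sub_le (-a) b,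
          norm_neg a]
    _ = 73 * ‖c₁‖ ^ 4 / 36864 + ‖c₁‖ ^ 2 * ‖c₂‖ / 2304 + ‖c₂‖ ^ 2 / 144 + ‖c₁‖ * ‖c₃‖ / 128 := by
        simp [a, b, c, d]
    _ ≤ 1 / 144 := hankel_majorant_le (norm_nonneg c₁) (norm_nonneg c₂) h₁ h₂ h₃

theorem BTB_hankel_log_bound (f : ℂ → ℂ) (hf : IsBTB f)
    (γ₁ γ₂ γ₃ : ℂ)
    (hγ₁ : γ₁ = tCoeff f 2 / 2)
    (hγ₂ : γ₂ = (1/2) * (tCoeff f 3 - (tCoeff f 2)^2 / 2))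
    (hγ₃ : γ₃ = (1/2) * (tCoeff f 4 - tCoeff f 2 * tCoeff f 3 + (tCoeff f 2)^3 / 3)) :
    ‖γ₁ * γ₃ - γ₂^2‖ ≤ 1/144 := by
  obtain ⟨hfa, -, hf'0, -, ω, hωa, hω0, hωb, hfd⟩ := hf
  have h0 : (0 : ℂ) ∈ ball (0 : ℂ) 1 := mem_ball_self one_pos
  have hg : AnalyticAt ℂ (deriv f) 0 := (hfa 0 h0).deriv
  have hω : IsDiskSelfMap ω :=
    ⟨hωa.differentiableOn, fun z hz => mem_closedBall_zero_iff.2 (hωb z hz).le⟩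
  have hode := ode_of_eventually_eq_psqrt hg (hωa 0 h0) hω0
    (eventually_of_mem (ball_mem_nhds 0 one_pos) hfd)
  obtain ⟨hg1, hg2, hg3⟩ := tCoeff_of_ode hg (hωa 0 h0) hf'0 hode
  obtain ⟨hc1, hc2, hc3⟩ := hω.norm_tCoeff_le_of_map_zero hω0
  have hH : γ₁ * γ₃ - γ₂ ^ 2 = -(73 * tCoeff ω 1 ^ 4 / 36864) - tCoeff ω 1 ^ 2 * tCoeff ω 2 / 2304
      - tCoeff ω 2 ^ 2 / 144 + tCoeff ω 1 * tCoeff ω 3 / 128 := by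
    rw [hγ₁, hγ₂, hγ₃, tCoeff_succ f 1, tCoeff_succ f 2, tCoeff_succ f 3, hg1, hg2, hg3]
    push_cast
    ring
  rw [hH]
  exact norm_hankel_le hc1 hc2 hc3
end

section
/- The function f_1 defined on the unit disk by f_1(z) = ∫₀^z (1 + tanh t)^{1/2} dt belongs to the class BT_B, and its first logarithmic coefficient γ_1 = a_2/2 satisfies |γ_1| = 1/8 (its second Taylor coefficient is a_2 = 1/4). Hence the bound |γ_1| ≤ 1/8 for the class BT_B is sharp. -/
open Complex Metric

noncomputable def f₁ (z : ℂ) : ℂ :=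
  ∫ t in (0:ℝ)..1, z * psqrt (1 + Complex.tanh ((t : ℂ) * z))

open Set Filter Topology

/-! Since `1 + tanh z = 2 / (1 + exp (-2 z))`, the value `1 + tanh z` lies in the slit plane
whenever `|Im z| < π / 2`, in particular on the unit disk. Hence `√(1 + tanh z)` is holomorphic
there with positive real part. By Morera it has a primitive on the disk, and `f₁`, its integral
along radii, is that primitive normalized at `0`; so `f₁' = √(1 + tanh z)`, i.e. `ω = id`.
Injectivity is the Noshiro–Warschawski theorem (`Re f' > 0` on a convex domain), and
`a₂ = f₁''(0) / 2 = (1/2) · (1/2) · tanh' 0 = 1/4`. -/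

namespace Complex

lemma one_add_exp_mem_slitPlane {w : ℂ} (hw : |w.im| < Real.pi) : 1 + exp w ∈ slitPlane := by
  rw [mem_slitPlane_iff, add_re, add_im, one_re, one_im, exp_re, exp_im, zero_add]
  by_cases hy : w.im = 0
  · left
    rw [hy, Real.cos_zero, mul_one]
    positivity
  · right
    rw [abs_lt] at hw
    exact mul_ne_zero (Real.exp_pos _).ne'
      (mt (Real.sin_eq_zero_iff_of_lt_of_lt hw.1 hw.2).1 hy)

lemma inv_mem_slitPlane {z : ℂ} (hz : z ∈ slitPlane) : z⁻¹ ∈ slitPlane := by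
  have hn : 0 < normSq z := normSq_pos.2 (slitPlane_ne_zero hz)
  rw [mem_slitPlane_iff, inv_re, inv_im] at *
  rcases hz with hre | him
  · exact Or.inl (div_pos hre hn)
  · exact Or.inr (div_ne_zero (neg_ne_zero.2 him) hn.ne')

lemma ofReal_mul_mem_slitPlane {r : ℝ} (hr : 0 < r) {z : ℂ} (hz : z ∈ slitPlane) :
    (r : ℂ) * z ∈ slitPlane := by
  rw [mem_slitPlane_iff, re_ofReal_mul, im_ofReal_mul] at *
  rcases hz with hre | him
  · exact Or.inl (mul_pos hr hre)
  · exact Or.inr (mul_ne_zero hr.ne' him)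

lemma two_mul_cosh_eq_exp_mul (z : ℂ) : 2 * cosh z = exp z * (1 + exp (-2 * z)) := by
  rw [two_cosh, mul_add, mul_one, ← exp_add]
  ring_nf

lemma one_add_exp_neg_two_mul_mem_slitPlane {z : ℂ} (hz : |z.im| < Real.pi / 2) :
    1 + exp (-2 * z) ∈ slitPlane := by
  apply one_add_exp_mem_slitPlane
  rw [show (-2 * z).im = -2 * z.im by simp, abs_mul]
  norm_num
  linarith

lemma cosh_ne_zero_of_abs_im_lt {z : ℂ} (hz : |z.im| < Real.pi / 2) : cosh z ≠ 0 := by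
  have h := two_mul_cosh_eq_exp_mul z
  intro h0
  rw [h0, mul_zero, eq_comm] at h
  exact mul_ne_zero (exp_ne_zero z)
    (slitPlane_ne_zero (one_add_exp_neg_two_mul_mem_slitPlane hz)) h

lemma one_add_tanh_eq {z : ℂ} (hz : cosh z ≠ 0) : 1 + tanh z = 2 * (1 + exp (-2 * z))⁻¹ := by
  have h := two_mul_cosh_eq_exp_mul z
  have hu : 1 + exp (-2 * z) ≠ 0 := by
    rintro hu
    rw [hu, mul_zero] at h
    exact hz (by simpa using h)
  rw [tanh_eq_sinh_div_cosh, one_add_div hz, cosh_add_sinh, div_eq_iff hz,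
    mul_right_comm, h, mul_inv_cancel_right₀ hu]

lemma one_add_tanh_mem_slitPlane {z : ℂ} (hz : |z.im| < Real.pi / 2) :
    1 + tanh z ∈ slitPlane := by
  rw [one_add_tanh_eq (cosh_ne_zero_of_abs_im_lt hz)]
  exact_mod_cast ofReal_mul_mem_slitPlane two_pos
    (inv_mem_slitPlane (one_add_exp_neg_two_mul_mem_slitPlane hz))

lemma hasDerivAt_tanh_s13 {z : ℂ} (hz : cosh z ≠ 0) : HasDerivAt tanh (cosh z ^ 2)⁻¹ z := by
  have h := (hasDerivAt_sinh z).div (hasDerivAt_cosh z) hz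
  rw [← sq, ← sq, cosh_sq_sub_sinh_sq, one_div] at h
  rwa [show (sinh / cosh : ℂ → ℂ) = tanh from
    funext fun w => (tanh_eq_sinh_div_cosh w).symm] at h

end Complex

lemma re_psqrt_pos {w : ℂ} (hw : w ∈ slitPlane) : 0 < (psqrt w).re := by
  have him : ((1 / 2 : ℂ) * log w).im = arg w / 2 := by
    simp [log_im]
    ring
  rw [psqrt, exp_re, him]
  refine mul_pos (Real.exp_pos _) (Real.cos_pos_of_mem_Ioo ⟨?_, ?_⟩)
  · linarith [neg_pi_lt_arg w]
  · linarith [(arg_le_pi w).lt_of_ne (slitPlane_arg_ne_pi hw)]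

lemma hasDerivAt_psqrt {w : ℂ} (hw : w ∈ slitPlane) :
    HasDerivAt psqrt (psqrt w / (2 * w)) w := by
  have h : HasDerivAt psqrt (psqrt w * (1 / 2 * (1 / w))) w :=
    (((hasDerivAt_id w).clog hw).const_mul (1 / 2 : ℂ)).cexp
  exact h.congr_deriv (by ring)

@[simp]
lemma psqrt_one : psqrt 1 = 1 := by
  simp [psqrt]

noncomputable def sqrtOneAddTanh (z : ℂ) : ℂ := psqrt (1 + tanh z)

lemma hasDerivAt_sqrtOneAddTanh {z : ℂ} (hz : |z.im| < Real.pi / 2) :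
    HasDerivAt sqrtOneAddTanh
      (psqrt (1 + tanh z) / (2 * (1 + tanh z)) * (cosh z ^ 2)⁻¹) z :=
  (hasDerivAt_psqrt (one_add_tanh_mem_slitPlane hz)).comp z
    ((hasDerivAt_tanh_s13 (cosh_ne_zero_of_abs_im_lt hz)).const_add 1)

lemma re_sqrtOneAddTanh_pos {z : ℂ} (hz : |z.im| < Real.pi / 2) :
    0 < (sqrtOneAddTanh z).re :=
  re_psqrt_pos (one_add_tanh_mem_slitPlane hz)

lemma sqrtOneAddTanh_zero : sqrtOneAddTanh 0 = 1 := by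
  simp [sqrtOneAddTanh]

lemma deriv_sqrtOneAddTanh_zero : deriv sqrtOneAddTanh 0 = 1 / 2 := by
  rw [(hasDerivAt_sqrtOneAddTanh (by simp [Real.pi_pos])).deriv]
  simp

lemma abs_im_lt_pi_div_two_of_mem_ball {z : ℂ} (hz : z ∈ ball (0 : ℂ) 1) :
    |z.im| < Real.pi / 2 := by
  have := mem_ball_zero_iff.1 hz
  linarith [abs_im_le_norm z, Real.pi_gt_three]

lemma differentiableOn_sqrtOneAddTanh : DifferentiableOn ℂ sqrtOneAddTanh (ball 0 1) :=
  fun _ hz => (hasDerivAt_sqrtOneAddTanh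
    (abs_im_lt_pi_div_two_of_mem_ball hz)).differentiableAt.differentiableWithinAt

theorem Convex.injOn_of_hasDerivAt_of_re_pos {s : Set ℂ} (hs : Convex ℝ s) {f f' : ℂ → ℂ}
    (hf : ∀ z ∈ s, HasDerivAt f (f' z) z) (hf' : ∀ z ∈ s, 0 < (f' z).re) : InjOn f s := by
  intro a ha b hb hab
  by_contra hne
  have hba : b - a ≠ 0 := sub_ne_zero.2 (Ne.symm hne)
  have hmem : ∀ t ∈ Set.Icc (0 : ℝ) 1, a + t * (b - a) ∈ s := fun t ht => by
    simpa [real_smul] using hs.add_smul_sub_mem ha hb ht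
  set φ : ℝ → ℝ := fun t => (f (a + t * (b - a)) / (b - a)).re
  have hφ : ∀ t ∈ Set.Icc (0 : ℝ) 1, HasDerivAt φ (f' (a + t * (b - a))).re t := by
    intro t ht
    have hline := ((hasDerivAt_id (t : ℂ)).mul_const (b - a)).const_add a
    have h := (((hf _ (hmem t ht)).comp (t : ℂ) hline).div_const (b - a)).real_of_complex
    simpa [hba] using h
  have hmono : StrictMonoOn φ (Set.Icc 0 1) :=
    strictMonoOn_of_hasDerivWithinAt_pos (convex_Icc 0 1)
      (fun t ht => (hφ t ht).continuousAt.continuousWithinAt)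
      (fun t ht => (hφ t (interior_subset ht)).hasDerivWithinAt)
      (fun t ht => hf' _ (hmem t (interior_subset ht)))
  have := hmono (Set.left_mem_Icc.2 zero_le_one) (Set.right_mem_Icc.2 zero_le_one) zero_lt_one
  simp [φ, hab] at this

theorem StarConvex.integral_radial_eq_sub_of_hasDerivAt {s : Set ℂ} (hs : StarConvex ℝ 0 s)
    {F g : ℂ → ℂ} (hF : ∀ w ∈ s, HasDerivAt F (g w) w) (hg : ContinuousOn g s) {z : ℂ}
    (hz : z ∈ s) : ∫ t in (0 : ℝ)..1, z * g (t * z) = F z - F 0 := by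
  have hmem : ∀ t ∈ Set.uIcc (0 : ℝ) 1, (t : ℂ) * z ∈ s := fun t ht => by
    rw [Set.uIcc_of_le zero_le_one] at ht
    simpa [real_smul] using hs.smul_mem hz ht.1 ht.2
  have hderiv : ∀ t ∈ Set.uIcc (0 : ℝ) 1,
      HasDerivAt (fun t : ℝ => F (t * z)) (z * g (t * z)) t := fun t ht => by
    simpa [mul_comm] using
      ((hF _ (hmem t ht)).comp (t : ℂ) (hasDerivAt_mul_const z)).comp_ofReal
  have hcont : ContinuousOn (fun t : ℝ => z * g (t * z)) (Set.uIcc 0 1) :=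
    continuousOn_const.mul (hg.comp (by fun_prop) hmem)
  rw [intervalIntegral.integral_eq_sub_of_hasDerivAt hderiv hcont.intervalIntegrable]
  simp

lemma hasDerivAt_f₁ {z : ℂ} (hz : z ∈ ball (0 : ℂ) 1) :
    HasDerivAt f₁ (sqrtOneAddTanh z) z := by
  obtain ⟨F, hF⟩ := differentiableOn_sqrtOneAddTanh.isExactOn_ball
  have hstar : StarConvex ℝ 0 (ball (0 : ℂ) 1) :=
    (convex_ball 0 1).starConvex (mem_ball_self one_pos)
  have heq : f₁ =ᶠ[𝓝 z] fun w => F w - F 0 :=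
    eventually_of_mem (isOpen_ball.mem_nhds hz) fun w hw =>
      hstar.integral_radial_eq_sub_of_hasDerivAt hF
        differentiableOn_sqrtOneAddTanh.continuousOn hw
  exact ((hF z hz).sub_const _).congr_of_eventuallyEq heq

theorem BTB_gamma1_sharp :
    IsBTB f₁ ∧ tCoeff f₁ 2 = 1/4 ∧ ‖tCoeff f₁ 2 / 2‖ = 1/8 := by
  have h0 : (0 : ℂ) ∈ ball (0 : ℂ) 1 := mem_ball_self one_pos
  have hderiv : ∀ z ∈ ball (0 : ℂ) 1, deriv f₁ z = sqrtOneAddTanh z :=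
    fun z hz => (hasDerivAt_f₁ hz).deriv
  have hanalytic : AnalyticOnNhd ℂ f₁ (ball 0 1) :=
    DifferentiableOn.analyticOnNhd
      (fun z hz => (hasDerivAt_f₁ hz).differentiableAt.differentiableWithinAt) isOpen_ball
  have hinj : InjOn f₁ (ball 0 1) :=
    (convex_ball 0 1).injOn_of_hasDerivAt_of_re_pos (fun z hz => hasDerivAt_f₁ hz)
      fun z hz => re_sqrtOneAddTanh_pos (abs_im_lt_pi_div_two_of_mem_ball hz)
  have ha₂ : tCoeff f₁ 2 = 1 / 4 := by
    have hderiv_nhds : deriv f₁ =ᶠ[𝓝 0] sqrtOneAddTanh :=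
      eventually_of_mem (isOpen_ball.mem_nhds h0) hderiv
    rw [tCoeff, iteratedDeriv_succ, iteratedDeriv_one, hderiv_nhds.deriv_eq,
      deriv_sqrtOneAddTanh_zero]
    norm_num
  refine ⟨⟨hanalytic, by simp [f₁], by rw [hderiv 0 h0, sqrtOneAddTanh_zero], hinj,
    id, analyticOnNhd_id, rfl, fun z hz => mem_ball_zero_iff.1 hz, hderiv⟩, ha₂, ?_⟩
  rw [ha₂]
  norm_num
end
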